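/- arXiv:1905.10280 — 4 statements merged into one kernel-verified Lean document; each statement's English description precedes it below -/
import Mathlib

section
/- For all real θ > 0 and y > 0, Im[ψ₂(θ)·ψ₂(θ+iy) − ψ₃(θ)·ψ₁(θ+iy)] > 0, i.e. Im[4·S₃(θ)·S₃(θ+iy) − 6·S₄(θ)·S₂(θ+iy)] > 0. (Since ψ₂(θ) < 0, this says that the vertical line θ + iℝ is steep descent at θ for the function h, namely that y ↦ Re h(θ+iy) is strictly decreasing for y > 0 and strictly increasing for y < 0.) -/
open Complex

/-- `S j z = ∑_{k=0}^∞ 1/(z+k)^j`, the series defining the polygamma functions: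
`ψ₁ = S₂`, `ψ₂ = −2S₃`, `ψ₃ = 6S₄`. -/
noncomputable def S (j : ℕ) (z : ℂ) : ℂ := ∑' k : ℕ, 1 / (z + k) ^ j

lemma summable_real_aux (θ : ℝ) (hθ : 0 < θ) (j : ℕ) (hj : 2 ≤ j) :
    Summable (fun k : ℕ => 1 / (θ + k) ^ j) := by
  have hbase : Summable (fun k : ℕ => 1 / ((k : ℝ) + 1) ^ j) := by
    have := (Real.summable_one_div_nat_pow (p := j)).2 hj
    have h2 := (summable_nat_add_iff (f := fun n : ℕ => 1 / (n : ℝ) ^ j) 1).2 this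
    simpa using h2
  have hM : (0:ℝ) < max 1 θ⁻¹ := lt_max_of_lt_left one_pos
  apply Summable.of_nonneg_of_le (fun k => by positivity)
    (fun k => ?_) (hbase.mul_left ((max 1 θ⁻¹) ^ j))
  have hpos : (0:ℝ) < θ + k := by positivity
  have hkey : (k : ℝ) + 1 ≤ (θ + k) * max 1 θ⁻¹ := by
    rcases le_total 1 θ with h | h
    · calc (k:ℝ) + 1 ≤ θ + k := by linarith
        _ ≤ (θ + k) * max 1 θ⁻¹ := le_mul_of_one_le_right hpos.le (le_max_left _ _)
    · have hθi : 1 ≤ θ⁻¹ := (one_le_inv_iff₀).2 ⟨hθ, h⟩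
      rw [max_eq_right hθi]
      have h1 : θ * θ⁻¹ = 1 := mul_inv_cancel₀ hθ.ne'
      have h2 : (k:ℝ) * 1 ≤ (k:ℝ) * θ⁻¹ :=
        mul_le_mul_of_nonneg_left hθi (Nat.cast_nonneg k)
      nlinarith
  have hdiv : ((k:ℝ)+1) / max 1 θ⁻¹ ≤ θ + k := (div_le_iff₀ hM).2 hkey
  have hdivpos : (0:ℝ) < ((k:ℝ)+1) / max 1 θ⁻¹ := by positivity
  have hpow : (((k:ℝ)+1) / max 1 θ⁻¹) ^ j ≤ (θ + k) ^ j :=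
    pow_le_pow_left₀ hdivpos.le hdiv j
  calc 1 / (θ + k) ^ j ≤ 1 / (((k:ℝ)+1) / max 1 θ⁻¹) ^ j :=
        one_div_le_one_div_of_le (by positivity) hpow
    _ = (max 1 θ⁻¹) ^ j * (1 / ((k:ℝ)+1) ^ j) := by
        rw [div_pow]; field_simp

lemma S_real_aux (θ : ℝ) (j : ℕ) :
    S j (θ : ℂ) = ((∑' k : ℕ, 1 / (θ + k) ^ j : ℝ) : ℂ) := by
  rw [S, Complex.ofReal_tsum]
  congr 1; ext k; push_cast; ring

lemma im_inv_sq (x y : ℝ) :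
    ((((x:ℂ)+y*I)^2)⁻¹).im = -(2*x*y)/((x^2+y^2)^2) := by
  rw [Complex.inv_im, map_pow, Complex.normSq_apply]
  simp [pow_two, Complex.mul_im]
  ring

lemma im_inv_cube (x y : ℝ) :
    ((((x:ℂ)+y*I)^3)⁻¹).im = -(y*(3*x^2-y^2))/((x^2+y^2)^3) := by
  rw [Complex.inv_im, map_pow, Complex.normSq_apply]
  simp [pow_succ, pow_zero, Complex.mul_im, Complex.mul_re]
  ring

lemma key_pos (a b y : ℝ) (ha : 0 < a) (hb : 0 < b) (hy : 0 < y) :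
    0 < (4 * (1/a^3) * (-(y*(3*b^2-y^2))/((b^2+y^2)^3))
          - 6 * (1/a^4) * (-(2*b*y)/((b^2+y^2)^2)))
        + (4 * (1/b^3) * (-(y*(3*a^2-y^2))/((a^2+y^2)^3))
          - 6 * (1/b^4) * (-(2*a*y)/((a^2+y^2)^2))) := by
  have hA : (0:ℝ) < a^2+y^2 := by positivity
  have hB : (0:ℝ) < b^2+y^2 := by positivity
  have heq : (4 * (1/a^3) * (-(y*(3*b^2-y^2))/((b^2+y^2)^3))
          - 6 * (1/a^4) * (-(2*b*y)/((b^2+y^2)^2)))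
        + (4 * (1/b^3) * (-(y*(3*a^2-y^2))/((a^2+y^2)^3))
          - 6 * (1/b^4) * (-(2*a*y)/((a^2+y^2)^2)))
      = 4*y*(3*y^2*(b-a)^2*(b+a) *
      (((a^2+y^2)*b^2)^2 + ((a^2+y^2)*b^2)*((b^2+y^2)*a^2) + ((b^2+y^2)*a^2)^2)
      + y^2*((a^2+y^2)^3*b^4*(3*b+a) + (b^2+y^2)^3*a^4*(3*a+b)))
      / (a^4*b^4*(a^2+y^2)^3*(b^2+y^2)^3) := by
    field_simp
    ring
  rw [heq]
  positivity

/-- For all real `θ > 0` and `y > 0`,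
`Im[ψ₂(θ)·ψ₂(θ+iy) − ψ₃(θ)·ψ₁(θ+iy)] = Im[4·S₃(θ)·S₃(θ+iy) − 6·S₄(θ)·S₂(θ+iy)] > 0`,
i.e. the vertical line `θ + iℝ` is steep descent at `θ` for the function `h`. -/
theorem steep_descent_vertical_line (θ y : ℝ) (hθ : 0 < θ) (hy : 0 < y) :
    0 < (4 * S 3 (θ : ℂ) * S 3 ((θ : ℂ) + y * I)
          - 6 * S 4 (θ : ℂ) * S 2 ((θ : ℂ) + y * I)).im := by
  set c : ℕ → ℝ := fun k => 1 / (θ + k) ^ 3 with hc_def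
  set d : ℕ → ℝ := fun k => 1 / (θ + k) ^ 4 with hd_def
  set u : ℕ → ℝ := fun k => -(y*(3*(θ+k)^2-y^2))/(((θ+k)^2+y^2)^3) with hu_def
  set v : ℕ → ℝ := fun k => -(2*(θ+k)*y)/(((θ+k)^2+y^2)^2) with hv_def
  have hc : Summable c := summable_real_aux θ hθ 3 (by norm_num)
  have hd : Summable d := summable_real_aux θ hθ 4 (by norm_num)
  -- complex series terms
  have hterm : ∀ (j : ℕ) (k : ℕ),
      1 / ((θ:ℂ) + y*I + k) ^ j = ((((θ + k : ℝ):ℂ) + y*I) ^ j)⁻¹ := by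
    intro j k
    rw [one_div]
    congr 2
    push_cast; ring
  have hre : ∀ k : ℕ, (((θ + k : ℝ):ℂ) + y*I).re = θ + k := by intro k; simp
  have hnormle : ∀ (j : ℕ) (k : ℕ),
      ‖((((θ + k : ℝ):ℂ) + y*I) ^ j)⁻¹‖ ≤ 1 / (θ + k) ^ j := by
    intro j k
    have hpos : (0:ℝ) < θ + k := by positivity
    rw [norm_inv, norm_pow, ← one_div]
    apply one_div_le_one_div_of_le (by positivity)
    apply pow_le_pow_left₀ hpos.le
    have h1 := Complex.abs_re_le_norm (((θ + k : ℝ):ℂ) + y*I)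
    rw [hre k] at h1
    exact (le_abs_self _).trans h1
  have hsumnorm : ∀ (j : ℕ), 2 ≤ j →
      Summable (fun k : ℕ => ‖((((θ + k : ℝ):ℂ) + y*I) ^ j)⁻¹‖) := fun j hj =>
    Summable.of_nonneg_of_le (fun k => norm_nonneg _) (hnormle j)
      (summable_real_aux θ hθ j hj)
  have hsumC : ∀ (j : ℕ), 2 ≤ j →
      Summable (fun k : ℕ => ((((θ + k : ℝ):ℂ) + y*I) ^ j)⁻¹) := fun j hj =>
    Summable.of_norm (hsumnorm j hj)
  -- rewrite S at real point
  rw [S_real_aux θ 3, S_real_aux θ 4]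
  -- rewrite S at complex point as tsum over rewritten terms
  have hSz : ∀ (j : ℕ), S j ((θ:ℂ) + y*I)
      = ∑' k : ℕ, ((((θ + k : ℝ):ℂ) + y*I) ^ j)⁻¹ := by
    intro j
    rw [S]
    congr 1; ext k; exact hterm j k
  -- imaginary parts
  have hIm3 : (S 3 ((θ:ℂ) + y*I)).im = ∑' k, u k := by
    rw [hSz 3, Complex.im_tsum (hsumC 3 (by norm_num))]
    congr 1; ext k
    rw [im_inv_cube]
  have hIm2 : (S 2 ((θ:ℂ) + y*I)).im = ∑' k, v k := by
    rw [hSz 2, Complex.im_tsum (hsumC 2 (by norm_num))]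
    congr 1; ext k
    rw [im_inv_sq]
  -- summability of u, v and their abs
  have hu_abs : Summable (fun k => ‖u k‖) := by
    apply Summable.of_nonneg_of_le (fun k => norm_nonneg _) (fun k => ?_)
      (hsumnorm 3 (by norm_num))
    have : u k = (((((θ + k : ℝ):ℂ) + y*I) ^ 3)⁻¹).im := by rw [im_inv_cube]
    rw [this]
    exact (Complex.abs_im_le_norm _).trans le_rfl
  have hv_abs : Summable (fun k => ‖v k‖) := by
    apply Summable.of_nonneg_of_le (fun k => norm_nonneg _) (fun k => ?_)
      (hsumnorm 2 (by norm_num))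
    have : v k = (((((θ + k : ℝ):ℂ) + y*I) ^ 2)⁻¹).im := by
      rw [im_inv_sq]
    rw [this]
    exact (Complex.abs_im_le_norm _).trans le_rfl
  have hu : Summable u := hu_abs.of_norm
  have hv : Summable v := hv_abs.of_norm
  have hc_abs : Summable (fun k => ‖c k‖) := hc.abs
  have hd_abs : Summable (fun k => ‖d k‖) := hd.abs
  -- reduce the goal
  have hgoal : (4 * ((∑' k, c k : ℝ):ℂ) * S 3 ((θ:ℂ) + y*I)
      - 6 * ((∑' k, d k : ℝ):ℂ) * S 2 ((θ:ℂ) + y*I)).im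
      = 4 * (∑' k, c k) * (∑' k, u k) - 6 * (∑' k, d k) * (∑' k, v k) := by
    rw [← hIm3, ← hIm2]
    simp [Complex.sub_im, Complex.mul_im]
  rw [hgoal]
  -- double sums
  have hprod3 : (∑' k, c k) * (∑' k, u k) = ∑' p : ℕ × ℕ, c p.1 * u p.2 :=
    tsum_mul_tsum_of_summable_norm hc_abs hu_abs
  have hprod2 : (∑' k, d k) * (∑' k, v k) = ∑' p : ℕ × ℕ, d p.1 * v p.2 :=
    tsum_mul_tsum_of_summable_norm hd_abs hv_abs
  have hcu : Summable (fun p : ℕ × ℕ => c p.1 * u p.2) :=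
    summable_mul_of_summable_norm hc_abs hu_abs
  have hdv : Summable (fun p : ℕ × ℕ => d p.1 * v p.2) :=
    summable_mul_of_summable_norm hd_abs hv_abs
  set G : ℕ × ℕ → ℝ := fun p => 4 * (c p.1 * u p.2) - 6 * (d p.1 * v p.2) with hG_def
  have hG : Summable G := (hcu.mul_left 4).sub (hdv.mul_left 6)
  have hGswap : Summable (fun p : ℕ × ℕ => G p.swap) :=
    (Equiv.prodComm ℕ ℕ).summable_iff.2 hG
  have hrw : 4 * ((∑' k, c k) * (∑' k, u k)) - 6 * ((∑' k, d k) * (∑' k, v k))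
      = ∑' p : ℕ × ℕ, G p := by
    rw [hprod3, hprod2, ← tsum_mul_left, ← tsum_mul_left,
      Summable.tsum_sub ((hcu.mul_left 4)) ((hdv.mul_left 6))]
  have hGpos : ∀ p : ℕ × ℕ, 0 < G p + G p.swap := by
    intro p
    have ha : (0:ℝ) < θ + p.1 := by positivity
    have hb : (0:ℝ) < θ + p.2 := by positivity
    have hkey := key_pos (θ + p.1) (θ + p.2) y ha hb hy
    simp only [hG_def, hc_def, hd_def, hu_def, hv_def, Prod.fst_swap, Prod.snd_swap]
    convert hkey using 1
    ring
  have hswap_eq : ∑' p : ℕ × ℕ, G p.swap = ∑' p : ℕ × ℕ, G p :=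
    (Equiv.prodComm ℕ ℕ).tsum_eq G
  have h2G : 0 < ∑' p : ℕ × ℕ, (G p + G p.swap) :=
    Summable.tsum_pos (hG.add hGswap) (fun p => (hGpos p).le) (0,0) (hGpos (0,0))
  rw [Summable.tsum_add hG hGswap, hswap_eq] at h2G
  have hfinal : 0 < ∑' p : ℕ × ℕ, G p := by linarith
  calc (0:ℝ) < ∑' p : ℕ × ℕ, G p := hfinal
    _ = 4 * ((∑' k, c k) * (∑' k, u k)) - 6 * ((∑' k, d k) * (∑' k, v k)) := hrw.symm
    _ = 4 * (∑' k, c k) * (∑' k, u k) - 6 * (∑' k, d k) * (∑' k, v k) := by ring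
end

section
/- For every real y > 0, Im[S₃(iy)] > 0; equivalently, Im[ψ₂(iy)] < 0 for all y > 0. -/
open Complex

/-!
For `w = iy + k` with `k ≥ 1` the partial fractions `1/((w-1)w(w+1)) = (1/((w-1)w) - 1/(w(w+1)))/2`
telescope, and `1/w³ = 1/((w-1)w(w+1)) - 1/(w³(w²-1))`. Hence
`S₃(iy) = 1/(iy)³ + 1/(2iy(iy+1)) - R`, where the first two terms have imaginary parts `1/y³`
and `-1/(2(y³+y))`. Since `|w² - 1| ≥ |Im w²| ≥ 2y`, we get
`|R| ≤ (1/2y) ∑_{k≥1} |k+iy|⁻³ ≤ (1/2y) ∫₀^∞ (x²+y²)^(-3/2) dx = 1/(2y³)`,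
so `Im S₃(iy) ≥ 1/(2y³) - 1/(2(y³+y)) > 0`.
-/

open Filter Topology Finset

/-- `x / √(x² + y²)` is an antiderivative of `y² / √(x² + y²)³`, which decreases on `x ≥ 0`. -/
theorem sq_div_sqrt_pow_three_le_sub {a y : ℝ} (ha : 0 ≤ a) (hy : y ≠ 0) :
    y ^ 2 / √((a + 1) ^ 2 + y ^ 2) ^ 3 ≤
      (a + 1) / √((a + 1) ^ 2 + y ^ 2) - a / √(a ^ 2 + y ^ 2) := by
  set A := √(a ^ 2 + y ^ 2)
  set B := √((a + 1) ^ 2 + y ^ 2)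
  have hA : 0 < A := Real.sqrt_pos.2 (by positivity)
  have hB : 0 < B := Real.sqrt_pos.2 (by positivity)
  have hA2 : A ^ 2 = a ^ 2 + y ^ 2 := Real.sq_sqrt (by positivity)
  have hB2 : B ^ 2 = (a + 1) ^ 2 + y ^ 2 := Real.sq_sqrt (by positivity)
  have hAB : A ≤ B := Real.sqrt_le_sqrt (by nlinarith)
  have hP : 0 < (a + 1) * A + a * B := by positivity
  have conj : ((a + 1) * A - a * B) * ((a + 1) * A + a * B) = y ^ 2 * (2 * a + 1) := by
    linear_combination (a + 1) ^ 2 * hA2 - a ^ 2 * hB2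
  have key : A * ((a + 1) * A + a * B) ≤ (2 * a + 1) * B ^ 2 := by
    have hAA : A * A ≤ B * B := mul_le_mul hAB hAB hA.le hB.le
    have hAB' : A * B ≤ B * B := mul_le_mul_of_nonneg_right hAB hB.le
    nlinarith [mul_le_mul_of_nonneg_left hAA (by linarith : 0 ≤ a + 1),
      mul_le_mul_of_nonneg_left hAB' ha]
  rw [div_sub_div _ _ hB.ne' hA.ne', div_le_div_iff₀ (by positivity) (by positivity)]
  refine le_of_mul_le_mul_right ?_ hP
  calc y ^ 2 * (B * A) * ((a + 1) * A + a * B)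
      = y ^ 2 * B * (A * ((a + 1) * A + a * B)) := by ring
    _ ≤ y ^ 2 * B * ((2 * a + 1) * B ^ 2) := by gcongr
    _ = ((a + 1) * A - B * a) * B ^ 3 * ((a + 1) * A + a * B) := by
      linear_combination -B ^ 3 * conj

theorem sum_range_inv_sqrt_pow_three_le {y : ℝ} (hy : y ≠ 0) (n : ℕ) :
    ∑ k ∈ range n, 1 / √((k + 1) ^ 2 + y ^ 2) ^ 3 ≤ 1 / y ^ 2 := by
  have telescoped : ∀ n : ℕ, ∑ k ∈ range n, y ^ 2 / √((k + 1) ^ 2 + y ^ 2) ^ 3 ≤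
      n / √(n ^ 2 + y ^ 2) := by
    intro n
    induction n with
    | zero => simp
    | succ n ih =>
      rw [sum_range_succ]
      push_cast
      linarith [sq_div_sqrt_pow_three_le_sub n.cast_nonneg hy]
  have hn : (n : ℝ) / √(n ^ 2 + y ^ 2) ≤ 1 :=
    div_le_one_of_le₀ (Real.le_sqrt_of_sq_le (by nlinarith)) (Real.sqrt_nonneg _)
  rw [le_div_iff₀ (by positivity), sum_mul]
  simpa only [mul_comm, ← mul_div_assoc, mul_one] using (telescoped n).trans hn

theorem summable_inv_sqrt_pow_three {y : ℝ} (hy : y ≠ 0) :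
    Summable fun k : ℕ => 1 / √((k + 1) ^ 2 + y ^ 2) ^ 3 :=
  summable_of_sum_range_le (fun _ => by positivity) (sum_range_inv_sqrt_pow_three_le hy)

theorem tsum_inv_sqrt_pow_three_le {y : ℝ} (hy : y ≠ 0) :
    ∑' k : ℕ, 1 / √((k + 1) ^ 2 + y ^ 2) ^ 3 ≤ 1 / y ^ 2 :=
  Real.tsum_le_of_sum_range_le (fun _ => by positivity) (sum_range_inv_sqrt_pow_three_le hy)

theorem Summable.hasSum_sub_succ {G : Type*} [AddCommGroup G] [TopologicalSpace G]
    [IsTopologicalAddGroup G] [T2Space G] {u : ℕ → G} {l : G}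
    (hs : Summable fun n => u n - u (n + 1)) (hu : Tendsto u atTop (𝓝 l)) :
    HasSum (fun n => u n - u (n + 1)) (u 0 - l) := by
  rw [hs.hasSum_iff_tendsto_nat]
  simpa only [sum_range_sub'] using tendsto_const_nhds.sub hu

theorem tendsto_one_div_add_natCast_mul_add_one (z : ℂ) :
    Tendsto (fun k : ℕ => 1 / ((z + k) * (z + k + 1))) atTop (𝓝 0) := by
  have hz : Tendsto (fun k : ℕ => z + k) atTop (Bornology.cobounded ℂ) :=
    (tendsto_const_add_cobounded z).comp tendsto_natCast_atTop_cobounded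
  have := (tendsto_inv₀_cobounded.comp hz).mul
    (tendsto_inv₀_cobounded.comp ((tendsto_add_const_cobounded 1).comp hz))
  rw [mul_zero] at this
  exact this.congr fun k => by simp only [Function.comp_def, one_div, mul_inv]

theorem one_div_pow_three_eq {w : ℂ} (h₀ : w ≠ 0) (h₁ : w - 1 ≠ 0) (h₂ : w + 1 ≠ 0) :
    1 / w ^ 3 = (1 / ((w - 1) * w) - 1 / (w * (w + 1))) / 2 - 1 / (w ^ 3 * (w ^ 2 - 1)) := by
  rw [show w ^ 2 - 1 = (w - 1) * (w + 1) by ring]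
  field_simp
  ring

theorem two_mul_abs_im_le_norm_sq_sub_one {w : ℂ} (hw : 1 ≤ w.re) :
    2 * |w.im| ≤ ‖w ^ 2 - 1‖ :=
  calc 2 * |w.im| ≤ |2 * w.re * w.im| := by
        rw [abs_mul, abs_mul, abs_two, abs_of_pos (one_pos.trans_le hw)]
        nlinarith [abs_nonneg w.im]
    _ = |(w ^ 2 - 1).im| := by congr 1; simp [sq]; ring
    _ ≤ ‖w ^ 2 - 1‖ := abs_im_le_norm _

theorem norm_one_div_pow_three_mul_sq_sub_one_le {w : ℂ} (hw : 1 ≤ w.re) (him : w.im ≠ 0) :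
    ‖1 / (w ^ 3 * (w ^ 2 - 1))‖ ≤ 1 / (2 * |w.im|) * (1 / ‖w‖ ^ 3) := by
  have hw0 : w ≠ 0 := fun h => him (by simp [h])
  rw [norm_div, norm_one, norm_mul, norm_pow, div_mul_div_comm, one_mul, mul_comm]
  gcongr
  exact two_mul_abs_im_le_norm_sq_sub_one hw

theorem norm_mul_I_add_natCast_add_one (y : ℝ) (k : ℕ) :
    ‖(y : ℂ) * I + (k + 1)‖ = √((k + 1) ^ 2 + y ^ 2) := by
  simpa [add_comm] using norm_add_mul_I ((k : ℝ) + 1) y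

theorem im_one_div_mul_I_pow_three {y : ℝ} (hy : y ≠ 0) :
    (1 / ((y : ℂ) * I) ^ 3).im = 1 / y ^ 3 := by
  have hy' : (y : ℂ) ≠ 0 := by exact_mod_cast hy
  have : 1 / ((y : ℂ) * I) ^ 3 = ((1 / y ^ 3 : ℝ) : ℂ) * I := by
    push_cast
    field_simp
    ring_nf
    simp [I_pow_four]
  rw [this, mul_I_im, ofReal_re]

theorem im_one_div_two_mul_mul_I_mul_add_one {y : ℝ} (hy : y ≠ 0) :
    (1 / (2 * ((y : ℂ) * I * ((y : ℂ) * I + 1)))).im = -1 / (2 * (y ^ 3 + y)) := by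
  have : 2 * ((y : ℂ) * I * ((y : ℂ) * I + 1)) = ((-2 * y ^ 2 : ℝ) : ℂ) + ((2 * y : ℝ) : ℂ) * I := by
    push_cast
    ring_nf
    rw [I_sq]
    ring
  rw [this, one_div, inv_im, normSq_add_mul_I, add_im, ofReal_im, mul_I_im, ofReal_re]
  field_simp
  ring

/-- The error of `1/w³ ≈ 1/((w-1)w(w+1))` at `w = iy + k + 1`. -/
noncomputable def cubeRemainder (y : ℝ) (k : ℕ) : ℂ :=
  1 / (((y : ℂ) * I + (k + 1)) ^ 3 * (((y : ℂ) * I + (k + 1)) ^ 2 - 1))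

section

variable {y : ℝ}

theorem norm_cubeRemainder_le (hy : y ≠ 0) (k : ℕ) :
    ‖cubeRemainder y k‖ ≤ 1 / (2 * |y|) * (1 / √((k + 1) ^ 2 + y ^ 2) ^ 3) := by
  simpa [cubeRemainder, norm_mul_I_add_natCast_add_one] using
    norm_one_div_pow_three_mul_sq_sub_one_le (w := y * I + (k + 1)) (by simp) (by simpa using hy)

theorem summable_cubeRemainder (hy : y ≠ 0) : Summable (cubeRemainder y) :=
  .of_norm_bounded ((summable_inv_sqrt_pow_three hy).mul_left _) (norm_cubeRemainder_le hy)

theorem norm_tsum_cubeRemainder_le (hy : y ≠ 0) :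
    ‖∑' k, cubeRemainder y k‖ ≤ 1 / (2 * |y| ^ 3) :=
  calc _ ≤ ∑' k : ℕ, 1 / (2 * |y|) * (1 / √((k + 1) ^ 2 + y ^ 2) ^ 3) :=
        tsum_of_norm_bounded ((summable_inv_sqrt_pow_three hy).mul_left _).hasSum
          (norm_cubeRemainder_le hy)
    _ ≤ 1 / (2 * |y|) * (1 / y ^ 2) := by
        rw [tsum_mul_left]
        gcongr
        exact tsum_inv_sqrt_pow_three_le hy
    _ = 1 / (2 * |y| ^ 3) := by rw [← sq_abs]; ring

theorem hasSum_S_three_mul_I (hy : y ≠ 0) :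
    HasSum (fun k : ℕ => 1 / ((y : ℂ) * I + k) ^ 3)
      (1 / ((y : ℂ) * I) ^ 3 + 1 / (2 * ((y : ℂ) * I * ((y : ℂ) * I + 1))) -
        ∑' k, cubeRemainder y k) := by
  set z : ℂ := y * I
  set u : ℕ → ℂ := fun k => 1 / ((z + k) * (z + k + 1))
  have hne : ∀ x : ℝ, z + x ≠ 0 := fun x h => hy (by simpa [z] using congrArg im h)
  have hsplit : ∀ k : ℕ, 1 / (z + (k + 1 : ℕ)) ^ 3 = (u k - u (k + 1)) / 2 - cubeRemainder y k := by
    intro k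
    have := one_div_pow_three_eq (w := z + (k + 1)) (by exact_mod_cast hne (k + 1))
      (by convert hne k using 1; push_cast; ring) (by convert hne (k + 2) using 1; push_cast; ring)
    simp only [u, cubeRemainder]
    push_cast
    convert this using 4
    ring
  have hsucc : Summable fun k : ℕ => 1 / (z + (k + 1 : ℕ)) ^ 3 := by
    refine .of_norm ((summable_inv_sqrt_pow_three hy).congr fun k => ?_)
    rw [norm_div, norm_one, norm_pow, Nat.cast_succ, norm_mul_I_add_natCast_add_one]
  have htel : HasSum (fun k => u k - u (k + 1)) (u 0) := by
    have hs : Summable fun k => u k - u (k + 1) :=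
      ((hsucc.add (summable_cubeRemainder hy)).mul_left 2).congr fun k => by rw [hsplit]; ring
    simpa using hs.hasSum_sub_succ (tendsto_one_div_add_natCast_mul_add_one z)
  rw [← hasSum_nat_add_iff' 1]
  convert (htel.div_const 2).sub (summable_cubeRemainder hy).hasSum using 1
  · exact funext hsplit
  · simp [u]
    ring

end

/-- For every real `y > 0`, `Im[S₃(iy)] > 0`; equivalently `Im[ψ₂(iy)] < 0`. -/
theorem im_S3_pos (y : ℝ) (hy : 0 < y) :
    0 < (S 3 ((y : ℂ) * I)).im ∧ ((-2 : ℂ) * S 3 ((y : ℂ) * I)).im < 0 := by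
  have him : (S 3 ((y : ℂ) * I)).im =
      1 / y ^ 3 + -1 / (2 * (y ^ 3 + y)) - (∑' k, cubeRemainder y k).im := by
    rw [S, (hasSum_S_three_mul_I hy.ne').tsum_eq, sub_im, add_im,
      im_one_div_mul_I_pow_three hy.ne', im_one_div_two_mul_mul_I_mul_add_one hy.ne']
  have hrem : (∑' k, cubeRemainder y k).im ≤ 1 / (2 * y ^ 3) := by
    simpa [abs_of_pos hy] using
      (abs_le.1 ((abs_im_le_norm _).trans (norm_tsum_cubeRemainder_le hy.ne'))).2
  have hmargin : 1 / (2 * y ^ 3) < 1 / y ^ 3 + -1 / (2 * (y ^ 3 + y)) := by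
    rw [div_add_div _ _ (by positivity) (by positivity),
      div_lt_div_iff₀ (by positivity) (by positivity)]
    nlinarith [pow_pos hy 3, pow_pos hy 4]
  have hpos : 0 < (S 3 ((y : ℂ) * I)).im := by linarith
  exact ⟨hpos, by simpa [mul_im] using hpos⟩
end

section
/- For every integer m ≥ 1 and every complex z with Re z ≥ 0 and z ≠ 0, |S_{m+1}(z) − 1/(m·z^m) − 1/(2·z^{m+1}) − (m+1)/(12·z^{m+2})| ≤ (m+1)(m+2)(m+3) / (120·|z|^{m+3}). (Equivalently, ψ_m(z) = (−1)^{m+1} m! [1/(m z^m) + 1/(2 z^{m+1}) + (m+1)/(12 z^{m+2}) + R_m(z)] with |R_m(z)| ≤ (m+1)(m+2)(m+3)/(120 |z|^{m+3}); this is the Euler–Maclaurin expansion of the polygamma function with explicit remainder bound.) -/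
open Complex

/-!
On `[k, k + 1]` the Euler–Maclaurin formula with the Bernoulli polynomial `B₃`, applied to
`f(t) = (z + t)^{-(m+1)}`, writes `f(k)` as a difference of consecutive values of the main term plus
the remainder `∫ B₃/6 · f'''`; the differences telescope to the main term at `z`. Using `|B₃| ≤ 1/18`
on `[0, 1]` and `|z + t|² ≥ |z|² + t²` (for `Re z ≥ 0`, `t ≥ 0`), the remainders add up to at most
`(m+1)(m+2)(m+3)/(108 |z|^m) · ∫₀^∞ (|z|² + t²)⁻² dt = (m+1)(m+2)(m+3) π / (432 |z|^{m+3})`,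
and `π/432 ≤ 1/120`.
-/

open Set Filter Topology intervalIntegral

theorem bernoulliFun_three (x : ℝ) : bernoulliFun 3 x = x ^ 3 - 3 / 2 * x ^ 2 + 1 / 2 * x := by
  simp [bernoulliFun, Polynomial.bernoulli_def, Finset.sum_range_succ,
    bernoulli_eq_bernoulli'_of_ne_one]
  ring

theorem abs_bernoulliFun_three_le {x : ℝ} (h₀ : 0 ≤ x) (h₁ : x ≤ 1) :
    |bernoulliFun 3 x| ≤ 1 / 18 := by
  rw [bernoulliFun_three, abs_le]
  have h₁' := sub_nonneg.mpr h₁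
  constructor <;> nlinarith [sq_nonneg (x * (1 - x) - 1 / 6), mul_nonneg (mul_nonneg h₀ h₁') h₀,
    mul_nonneg h₀ h₁', sq_nonneg (x - 1 / 2)]

section EulerMaclaurin

variable {E : Type*} [NormedAddCommGroup E] [NormedSpace ℝ E]

theorem integral_unitInterval_eq_trapezoid_sub_bernoulliFun_three [CompleteSpace E]
    {f f₁ f₂ f₃ : ℝ → E}
    (hf : ∀ x ∈ Icc (0 : ℝ) 1, HasDerivAt f (f₁ x) x)
    (hf₁ : ∀ x ∈ Icc (0 : ℝ) 1, HasDerivAt f₁ (f₂ x) x)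
    (hf₂ : ∀ x ∈ Icc (0 : ℝ) 1, HasDerivAt f₂ (f₃ x) x)
    (hf₃ : ContinuousOn f₃ (Icc 0 1)) :
    ∫ x in (0 : ℝ)..1, f x = (2⁻¹ : ℝ) • (f 0 + f 1) - (12⁻¹ : ℝ) • (f₁ 1 - f₁ 0)
      - ∫ x in (0 : ℝ)..1, (bernoulliFun 3 x / 6) • f₃ x := by
  rw [← uIcc_of_le zero_le_one] at hf hf₁ hf₂ hf₃
  have hG : ∀ x ∈ uIcc (0 : ℝ) 1, HasDerivAt
      (fun t ↦ bernoulliFun 1 t • f t - (bernoulliFun 2 t / 2) • f₁ t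
        + (bernoulliFun 3 t / 6) • f₂ t)
      (f x + (bernoulliFun 3 x / 6) • f₃ x) x := by
    intro x hx
    have hB (k : ℕ) := hasDerivAt_bernoulliFun k x
    refine ((((hB 1).smul (hf x hx)).sub (((hB 2).div_const 2).smul (hf₁ x hx))).add
      (((hB 3).div_const 6).smul (hf₂ x hx))).congr_deriv ?_
    simp only [Nat.cast_ofNat, Nat.cast_one, Nat.sub_self, Nat.add_one_sub_one, bernoulliFun_zero]
    module
  have hfc : ContinuousOn f (uIcc 0 1) := fun x hx ↦ (hf x hx).continuousAt.continuousWithinAt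
  have hBf₃ : ContinuousOn (fun x ↦ (bernoulliFun 3 x / 6) • f₃ x) (uIcc 0 1) :=
    ((continuous_bernoulliFun 3).div_const 6).continuousOn.smul hf₃
  have hFTC := integral_eq_sub_of_hasDerivAt hG (hfc.add hBf₃).intervalIntegrable
  rw [integral_add hfc.intervalIntegrable hBf₃.intervalIntegrable] at hFTC
  rw [eq_sub_iff_add_eq, hFTC]
  simp only [bernoulliFun_one, bernoulliFun_two, bernoulliFun_three]
  module

theorem norm_integral_bernoulliFun_three_smul_le {h : ℝ → E}
    (hh : IntervalIntegrable h MeasureTheory.volume 0 1) :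
    ‖∫ x in (0 : ℝ)..1, (bernoulliFun 3 x / 6) • h x‖ ≤ 108⁻¹ * ∫ x in (0 : ℝ)..1, ‖h x‖ := by
  rw [← integral_const_mul]
  refine norm_integral_le_of_norm_le zero_le_one (.of_forall fun x hx ↦ ?_)
    (hh.norm.const_mul _)
  rw [norm_smul, Real.norm_eq_abs, abs_div, abs_of_pos (by norm_num : (0 : ℝ) < 6)]
  have := abs_bernoulliFun_three_le hx.1.le hx.2
  gcongr
  linarith

end EulerMaclaurin

theorem hasDerivAt_div_add_ofReal_pow (c w : ℂ) (j : ℕ) {x : ℝ} (h : w + x ≠ 0) :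
    HasDerivAt (fun t : ℝ ↦ c / (w + t) ^ j) (-(c * j) / (w + x) ^ (j + 1)) x := by
  refine ((((((hasDerivAt_id (x : ℂ)).const_add w).pow j).inv (pow_ne_zero j h)).const_mul c
    ).comp_ofReal).congr_deriv ?_
  rcases j with _ | j
  · simp
  · simp only [Pi.pow_apply, id, Nat.add_sub_cancel]
    field_simp
    ring

section Geometry

variable {z : ℂ} {t : ℝ}

theorem sq_norm_add_sq_le_sq_norm_add_ofReal (hz : 0 ≤ z.re) (ht : 0 ≤ t) :
    ‖z‖ ^ 2 + t ^ 2 ≤ ‖z + t‖ ^ 2 := by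
  simp only [Complex.sq_norm, Complex.normSq_apply, add_re, add_im, ofReal_re, ofReal_im, add_zero]
  nlinarith [mul_nonneg hz ht]

theorem norm_le_norm_add_ofReal (hz : 0 ≤ z.re) (ht : 0 ≤ t) : ‖z‖ ≤ ‖z + t‖ :=
  le_of_sq_le_sq (by nlinarith [sq_norm_add_sq_le_sq_norm_add_ofReal hz ht]) (norm_nonneg _)

theorem le_norm_add_ofReal (hz : 0 ≤ z.re) (ht : 0 ≤ t) : t ≤ ‖z + t‖ :=
  le_of_sq_le_sq (by nlinarith [sq_norm_add_sq_le_sq_norm_add_ofReal hz ht]) (norm_nonneg _)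

theorem add_ofReal_ne_zero (hz : 0 ≤ z.re) (hz₀ : z ≠ 0) (ht : 0 ≤ t) : z + t ≠ 0 :=
  norm_pos_iff.mp ((norm_pos_iff.mpr hz₀).trans_le (norm_le_norm_add_ofReal hz ht))

theorem norm_div_add_ofReal_pow_le (c : ℂ) (m : ℕ) (hz : 0 ≤ z.re) (hz₀ : z ≠ 0) (ht : 0 ≤ t) :
    ‖c / (z + t) ^ (m + 4)‖ ≤ ‖c‖ / (‖z‖ ^ m * (‖z‖ ^ 2 + t ^ 2) ^ 2) := by
  have := norm_pos_iff.mpr hz₀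
  rw [norm_div, norm_pow]
  gcongr
  calc ‖z‖ ^ m * (‖z‖ ^ 2 + t ^ 2) ^ 2 ≤ ‖z + t‖ ^ m * (‖z + t‖ ^ 2) ^ 2 := by
        gcongr
        exacts [norm_le_norm_add_ofReal hz ht, sq_norm_add_sq_le_sq_norm_add_ofReal hz ht]
    _ = ‖z + t‖ ^ (m + 4) := by ring

end Geometry

theorem summable_one_div_add_natCast_pow {z : ℂ} (hz : 0 ≤ z.re) {j : ℕ} (hj : 2 ≤ j) :
    Summable fun k : ℕ ↦ 1 / (z + k) ^ j := by
  refine Summable.of_norm_bounded_eventually_nat (Real.summable_one_div_nat_pow.mpr hj) ?_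
  filter_upwards [eventually_ge_atTop 1] with k hk
  have : (0 : ℝ) < k := by exact_mod_cast hk
  rw [norm_div, norm_one, norm_pow]
  gcongr
  simpa using le_norm_add_ofReal hz k.cast_nonneg

theorem norm_tsum_sub_le_of_sum_norm_sub_telescoping_le {E : Type*} [NormedAddCommGroup E]
    [CompleteSpace E] {a u : ℕ → E} {B : ℝ} (ha : Summable a) (hu : Tendsto u atTop (𝓝 0))
    (hB : ∀ N, ∑ k ∈ Finset.range N, ‖a k - (u k - u (k + 1))‖ ≤ B) :
    ‖∑' k, a k - u 0‖ ≤ B := by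
  set r : ℕ → E := fun k ↦ a k - (u k - u (k + 1))
  have hr : Summable fun k ↦ ‖r k‖ := summable_of_sum_range_le (fun _ ↦ norm_nonneg _) hB
  have htel : HasSum (fun k ↦ u k - u (k + 1)) (u 0) := by
    refine ((ha.sub hr.of_norm).congr fun k ↦ ?_).hasSum_iff_tendsto_nat.mpr ?_
    · simp only [r]; abel
    · simpa only [Finset.sum_range_sub', sub_zero] using tendsto_const_nhds.sub hu
  rw [← htel.tsum_eq, ← ha.tsum_sub htel.summable]
  exact (norm_tsum_le_tsum_norm hr).trans (Real.tsum_le_of_sum_range_le (fun _ ↦ norm_nonneg _) hB)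

theorem hasDerivAt_antideriv_inv_sq_add_sq_sq {r : ℝ} (hr : 0 < r) (t : ℝ) :
    HasDerivAt (fun t ↦ t / (2 * r ^ 2 * (r ^ 2 + t ^ 2)) + Real.arctan (t / r) / (2 * r ^ 3))
      ((r ^ 2 + t ^ 2) ^ 2)⁻¹ t := by
  have hd : HasDerivAt (fun t ↦ 2 * r ^ 2 * (r ^ 2 + t ^ 2)) (2 * r ^ 2 * (2 * t)) t := by
    simpa using ((hasDerivAt_pow 2 t).const_add (r ^ 2)).const_mul (2 * r ^ 2)
  refine (((hasDerivAt_id t).div hd (by positivity)).add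
    ((((hasDerivAt_id t).div_const r).arctan).div_const (2 * r ^ 3))).congr_deriv ?_
  simp only [id]
  field_simp
  ring

theorem integral_inv_sq_add_sq_sq_le {r : ℝ} (hr : 0 < r) (b : ℝ) :
    ∫ t in (0 : ℝ)..b, ((r ^ 2 + t ^ 2) ^ 2)⁻¹ ≤ Real.pi / (4 * r ^ 3) := by
  set F : ℝ → ℝ := fun t ↦ t / (2 * r ^ 2 * (r ^ 2 + t ^ 2)) + Real.arctan (t / r) / (2 * r ^ 3)
  have hF := hasDerivAt_antideriv_inv_sq_add_sq_sq hr
  have hmono : Monotone F :=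
    monotone_of_deriv_nonneg (fun t ↦ (hF t).differentiableAt)
      fun t ↦ (hF t).deriv ▸ by positivity
  have hlim : Tendsto F atTop (𝓝 (Real.pi / (4 * r ^ 3))) := by
    have h₁ : Tendsto (fun t ↦ t / (2 * r ^ 2 * (r ^ 2 + t ^ 2))) atTop (𝓝 0) := by
      have h₀ : Tendsto (fun t : ℝ ↦ (2 * r ^ 2)⁻¹ * t⁻¹) atTop (𝓝 0) :=
        mul_zero (2 * r ^ 2)⁻¹ ▸ tendsto_inv_atTop_zero.const_mul _
      refine squeeze_zero' ?_ ?_ h₀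
      · filter_upwards [eventually_ge_atTop 0] with t ht
        positivity
      · filter_upwards [eventually_gt_atTop 0] with t ht
        rw [← mul_inv, ← one_div, div_le_div_iff₀ (by positivity) (by positivity)]
        nlinarith [sq_nonneg r]
    have h₂ : Tendsto (fun t ↦ Real.arctan (t / r) / (2 * r ^ 3)) atTop
        (𝓝 (Real.pi / 2 / (2 * r ^ 3))) :=
      ((tendsto_nhds_of_tendsto_nhdsWithin Real.tendsto_arctan_atTop).comp
        (tendsto_id.atTop_div_const hr)).div_const _
    convert h₁.add h₂ using 2
    ring
  rw [integral_eq_sub_of_hasDerivAt (fun t _ ↦ hF t)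
    ((Continuous.inv₀ (by fun_prop) fun t ↦ by positivity).intervalIntegrable _ _)]
  simpa [F] using hmono.ge_of_tendsto hlim b

/-- The first three terms of the Euler–Maclaurin expansion of `S (m + 1) w`. -/
noncomputable def eulerMaclaurinMainTerm (m : ℕ) (w : ℂ) : ℂ :=
  1 / (m * w ^ m) + 1 / (2 * w ^ (m + 1)) + (m + 1) / (12 * w ^ (m + 2))

theorem tendsto_eulerMaclaurinMainTerm_cobounded {m : ℕ} (hm : m ≠ 0) :
    Tendsto (eulerMaclaurinMainTerm m) (Bornology.cobounded ℂ) (𝓝 0) := by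
  have h (j : ℕ) (hj : j ≠ 0) (c : ℂ) :
      Tendsto (fun w : ℂ ↦ c * (w ^ j)⁻¹) (Bornology.cobounded ℂ) (𝓝 0) := by
    simpa using (tendsto_inv₀_cobounded.comp (tendsto_pow_cobounded_cobounded hj)).const_mul c
  have := ((h m hm (m : ℂ)⁻¹).add (h (m + 1) m.succ_ne_zero 2⁻¹)).add
    (h (m + 2) (by omega) ((m + 1) / 12))
  simp only [add_zero] at this
  refine this.congr fun w ↦ ?_
  simp only [eulerMaclaurinMainTerm]
  ring

theorem one_div_pow_sub_eulerMaclaurinMainTerm_sub_eq {m : ℕ} (hm : m ≠ 0) {w : ℂ}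
    (hw : ∀ x ∈ Icc (0 : ℝ) 1, w + x ≠ 0) :
    1 / w ^ (m + 1) - (eulerMaclaurinMainTerm m w - eulerMaclaurinMainTerm m (w + 1)) =
      ∫ x in (0 : ℝ)..1,
        (bernoulliFun 3 x / 6) • (-((m + 1) * (m + 2) * (m + 3)) / (w + x) ^ (m + 4)) := by
  have hd (c : ℂ) (j : ℕ) (x : ℝ) (hx : x ∈ Icc (0 : ℝ) 1) :=
    hasDerivAt_div_add_ofReal_pow c w j (hw x hx)
  have hEM := integral_unitInterval_eq_trapezoid_sub_bernoulliFun_three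
    (f := fun t : ℝ ↦ 1 / (w + t) ^ (m + 1)) (f₁ := fun t ↦ -(m + 1) / (w + t) ^ (m + 2))
    (f₂ := fun t ↦ (m + 1) * (m + 2) / (w + t) ^ (m + 3))
    (f₃ := fun t ↦ -((m + 1) * (m + 2) * (m + 3)) / (w + t) ^ (m + 4))
    (fun x hx ↦ (hd _ _ x hx).congr_deriv (by push_cast; ring))
    (fun x hx ↦ (hd _ _ x hx).congr_deriv (by push_cast; ring))
    (fun x hx ↦ (hd _ _ x hx).congr_deriv (by push_cast; ring))
    (fun x hx ↦ (hd _ _ x hx).continuousAt.continuousWithinAt)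
  have hI : ∫ x in (0 : ℝ)..1, 1 / (w + x) ^ (m + 1) = 1 / (m * w ^ m) - 1 / (m * (w + 1) ^ m) := by
    rw [← uIcc_of_le zero_le_one] at hd
    rw [integral_eq_sub_of_hasDerivAt (f := fun t : ℝ ↦ -(m : ℂ)⁻¹ / (w + t) ^ m)
      (fun x hx ↦ (hd _ _ x hx).congr_deriv (by field_simp))
      (ContinuousOn.intervalIntegrable fun x hx ↦ (hd _ _ x hx).continuousAt.continuousWithinAt)]
    push_cast
    ring
  rw [hI] at hEM
  simp only [Complex.ofReal_zero, Complex.ofReal_one, add_zero, Complex.real_smul,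
    eulerMaclaurinMainTerm] at hEM ⊢
  push_cast at hEM ⊢
  generalize w + 1 = v at hEM ⊢
  linear_combination -hEM

theorem norm_one_div_pow_sub_eulerMaclaurinMainTerm_sub_le {m : ℕ} (hm : m ≠ 0) {z : ℂ}
    (hz : 0 ≤ z.re) (hz₀ : z ≠ 0) (k : ℕ) :
    ‖1 / (z + k) ^ (m + 1)
        - (eulerMaclaurinMainTerm m (z + k) - eulerMaclaurinMainTerm m (z + (k + 1 : ℕ)))‖ ≤
      (m + 1) * (m + 2) * (m + 3) / (108 * ‖z‖ ^ m)
        * ∫ t in (k : ℝ)..k + 1, ((‖z‖ ^ 2 + t ^ 2) ^ 2)⁻¹ := by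
  have hzk (x : ℝ) : z + k + x = z + ((k + x : ℝ) : ℂ) := by push_cast; ring
  have hne (x : ℝ) (hx : 0 ≤ x) : z + k + x ≠ 0 :=
    hzk x ▸ add_ofReal_ne_zero hz hz₀ (add_nonneg k.cast_nonneg hx)
  rw [Nat.cast_succ, ← add_assoc, one_div_pow_sub_eulerMaclaurinMainTerm_sub_eq hm
    fun x hx ↦ hne x hx.1]
  set c : ℂ := -((m + 1) * (m + 2) * (m + 3))
  have hc : ‖c‖ = (m + 1) * (m + 2) * (m + 3) := by
    simp only [c, norm_neg]
    exact_mod_cast Complex.norm_natCast ((m + 1) * (m + 2) * (m + 3))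
  have hint : IntervalIntegrable (fun x : ℝ ↦ c / (z + k + x) ^ (m + 4)) MeasureTheory.volume 0 1 :=
    ContinuousOn.intervalIntegrable fun x hx ↦
      (hasDerivAt_div_add_ofReal_pow c (z + k) (m + 4)
        (hne x (by rw [uIcc_of_le zero_le_one] at hx; exact hx.1))).continuousAt.continuousWithinAt
  refine (norm_integral_bernoulliFun_three_smul_le hint).trans ?_
  calc 108⁻¹ * ∫ x in (0 : ℝ)..1, ‖c / (z + k + x) ^ (m + 4)‖
      ≤ 108⁻¹ * ∫ x in (0 : ℝ)..1, ‖c‖ / (‖z‖ ^ m * (‖z‖ ^ 2 + (k + x) ^ 2) ^ 2) := by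
        gcongr
        refine integral_mono_on zero_le_one hint.norm ?_ fun x hx ↦ ?_
        · have := norm_pos_iff.mpr hz₀
          exact (continuous_const.div (by fun_prop) fun x ↦ by positivity).intervalIntegrable _ _
        · rw [hzk]
          exact norm_div_add_ofReal_pow_le c m hz hz₀ (add_nonneg k.cast_nonneg hx.1)
    _ = _ := by
        rw [integral_comp_add_left (fun t ↦ ‖c‖ / (‖z‖ ^ m * (‖z‖ ^ 2 + t ^ 2) ^ 2)), hc, add_zero,
          ← integral_const_mul, ← integral_const_mul]
        congr 1
        ext t
        field_simp

theorem norm_S_sub_eulerMaclaurinMainTerm_le {m : ℕ} (hm : m ≠ 0) {z : ℂ} (hz : 0 ≤ z.re)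
    (hz₀ : z ≠ 0) :
    ‖S (m + 1) z - eulerMaclaurinMainTerm m z‖ ≤
      (m + 1) * (m + 2) * (m + 3) / (108 * ‖z‖ ^ m) * (Real.pi / (4 * ‖z‖ ^ 3)) := by
  have hr := norm_pos_iff.mpr hz₀
  have hu : Tendsto (fun k : ℕ ↦ eulerMaclaurinMainTerm m (z + k)) atTop (𝓝 0) :=
    (tendsto_eulerMaclaurinMainTerm_cobounded hm).comp
      ((tendsto_const_add_cobounded z).comp tendsto_natCast_atTop_cobounded)
  have hB (N : ℕ) : ∑ k ∈ Finset.range N, ‖1 / (z + k) ^ (m + 1)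
        - (eulerMaclaurinMainTerm m (z + k) - eulerMaclaurinMainTerm m (z + (k + 1 : ℕ)))‖ ≤
      (m + 1) * (m + 2) * (m + 3) / (108 * ‖z‖ ^ m) * (Real.pi / (4 * ‖z‖ ^ 3)) := by
    have hg : Continuous fun t : ℝ ↦ ((‖z‖ ^ 2 + t ^ 2) ^ 2)⁻¹ :=
      Continuous.inv₀ (by fun_prop) fun t ↦ by positivity
    calc _ ≤ ∑ k ∈ Finset.range N, (m + 1) * (m + 2) * (m + 3) / (108 * ‖z‖ ^ m)
            * ∫ t in (k : ℝ)..k + 1, ((‖z‖ ^ 2 + t ^ 2) ^ 2)⁻¹ :=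
          Finset.sum_le_sum fun k _ ↦ norm_one_div_pow_sub_eulerMaclaurinMainTerm_sub_le hm hz hz₀ k
      _ = (m + 1) * (m + 2) * (m + 3) / (108 * ‖z‖ ^ m)
            * ∫ t in (0 : ℝ)..N, ((‖z‖ ^ 2 + t ^ 2) ^ 2)⁻¹ := by
          rw [← Finset.mul_sum, ← Nat.cast_zero (R := ℝ), ← sum_integral_adjacent_intervals
            fun k _ ↦ hg.intervalIntegrable _ _]
          push_cast
          rfl
      _ ≤ _ := by
          gcongr
          exact integral_inv_sq_add_sq_sq_le hr N
  have := norm_tsum_sub_le_of_sum_norm_sub_telescoping_le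
    (summable_one_div_add_natCast_pow hz (by omega : 2 ≤ m + 1)) hu hB
  rwa [Nat.cast_zero, add_zero] at this

/-- Euler–Maclaurin expansion of the polygamma function with explicit remainder bound:
for `m ≥ 1` and `Re z ≥ 0`, `z ≠ 0`,
`|S_{m+1}(z) − 1/(m z^m) − 1/(2 z^{m+1}) − (m+1)/(12 z^{m+2})|
  ≤ (m+1)(m+2)(m+3)/(120 |z|^{m+3})`. -/
theorem euler_maclaurin_polygamma (m : ℕ) (hm : 1 ≤ m) (z : ℂ) (hre : 0 ≤ z.re)
    (hz : z ≠ 0) :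
    ‖S (m + 1) z - 1 / ((m : ℂ) * z ^ m) - 1 / (2 * z ^ (m + 1))
        - ((m : ℂ) + 1) / (12 * z ^ (m + 2))‖
      ≤ ((m : ℝ) + 1) * ((m : ℝ) + 2) * ((m : ℝ) + 3) / (120 * ‖z‖ ^ (m + 3)) := by
  have hr := norm_pos_iff.mpr hz
  calc _ = ‖S (m + 1) z - eulerMaclaurinMainTerm m z‖ := by
        congr 1
        simp only [eulerMaclaurinMainTerm]
        ring
    _ ≤ (m + 1) * (m + 2) * (m + 3) / (108 * ‖z‖ ^ m) * (Real.pi / (4 * ‖z‖ ^ 3)) :=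
        norm_S_sub_eulerMaclaurinMainTerm_le (by omega) hre hz
    _ = (m + 1) * (m + 2) * (m + 3) / ‖z‖ ^ (m + 3) * (Real.pi / 432) := by
        rw [pow_add]
        field_simp
        ring
    _ ≤ (m + 1) * (m + 2) * (m + 3) / ‖z‖ ^ (m + 3) * (1 / 120) :=
        mul_le_mul_of_nonneg_left (by linarith [Real.pi_lt_d2]) (by positivity)
    _ = _ := by ring
end

section
/- For every ε > 0 there exists M > 0 such that for every real t ≥ 1/2 + ε and every real y with |y| > M, Re[S₂(t + iy)] > 0; equivalently, Re[ψ₁(t + iy)] > 0. (In particular, for such y the function a ↦ log|Γ(a + iy)| is convex on [1/2 + ε, ∞).) -/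
open Complex

/-!
With `a = z + k`, the partial fraction identity
`1/a² = (1/a - 1/(a+1)) + (1/(a(a+1)) - 1/((a+1)(a+2)))/2 + 2/(a²(a+1)(a+2))`
telescopes to `S₂(z) = 1/z + 1/(2z(z+1)) + Σₖ 2/((z+k)²(z+k+1)(z+k+2))`.
For `z = t + iy` with `t > 0` the first term has real part `t/|z|²`, the second has modulus at
most `1/(2|z|²)`, and the tail is bounded by `(2/|z|²) Σₖ 1/|z+k|² ≤ 4/(|z|²(t+|y|-1))`.
Hence `|z|² Re S₂(z) ≥ t - 1/2 - 4/(t+|y|-1)`, which is positive once `t ≥ 1/2 + ε` and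
`|y| > 4/ε + 1`.
-/

open Filter Topology

theorem hasSum_sub_succ_of_tendsto_zero {E : Type*} [AddCommGroup E] [TopologicalSpace E]
    [IsTopologicalAddGroup E] [T2Space E] {g : ℕ → E}
    (hs : Summable fun k ↦ g k - g (k + 1)) (h0 : Tendsto g atTop (𝓝 0)) :
    HasSum (fun k ↦ g k - g (k + 1)) (g 0) := by
  have hpartial : Tendsto (fun n ↦ ∑ k ∈ Finset.range n, (g k - g (k + 1))) atTop (𝓝 (g 0)) := by
    simpa only [Finset.sum_range_sub', sub_zero] using tendsto_const_nhds.sub h0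
  convert hs.hasSum
  exact tendsto_nhds_unique hpartial hs.hasSum.tendsto_sum_nat

theorem one_div_sq_eq_telescoping_add (a : ℂ) (h0 : a ≠ 0) (h1 : a + 1 ≠ 0) (h2 : a + 2 ≠ 0) :
    1 / a ^ 2 = (a⁻¹ - (a + 1)⁻¹) + (a⁻¹ * (a + 1)⁻¹ - (a + 1)⁻¹ * (a + 2)⁻¹) / 2
      + 2 / (a ^ 2 * (a + 1) * (a + 2)) := by
  field_simp
  ring

noncomputable def psi1Remainder (z : ℂ) (k : ℕ) : ℂ := 2 / ((z + k) ^ 2 * (z + k + 1) * (z + k + 2))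

section

variable {z : ℂ}

theorem add_natCast_ne_zero (hz : 0 < z.re) (k : ℕ) : z + k ≠ 0 := by
  intro h
  have := congrArg re h
  simp only [add_re, natCast_re, zero_re] at this
  linarith [k.cast_nonneg (α := ℝ)]

theorem norm_le_norm_add_natCast (hz : 0 ≤ z.re) (k : ℕ) : ‖z‖ ≤ ‖z + k‖ := by
  rw [← sq_le_sq₀ (norm_nonneg _) (norm_nonneg _), Complex.sq_norm, Complex.sq_norm, normSq_apply,
    normSq_apply]
  simp only [add_re, natCast_re, add_im, natCast_im, add_zero]
  nlinarith [k.cast_nonneg (α := ℝ)]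

theorem tendsto_inv_add_natCast : Tendsto (fun k : ℕ ↦ (z + k)⁻¹) atTop (𝓝 0) :=
  tendsto_inv₀_cobounded.comp ((tendsto_const_add_cobounded z).comp tendsto_natCast_atTop_cobounded)

theorem summable_inv_sq_norm_add_natCast (hz : 0 < z.re) :
    Summable fun k : ℕ ↦ (‖z + k‖ ^ 2)⁻¹ := by
  refine ((Real.summable_one_div_nat_add_rpow z.re 2).mpr one_lt_two).of_nonneg_of_le
    (fun k ↦ by positivity) fun k ↦ ?_
  have hk : 0 < (k : ℝ) + z.re := by linarith [k.cast_nonneg (α := ℝ)]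
  rw [Real.rpow_two, one_div, abs_of_pos hk]
  gcongr
  simpa [add_comm] using re_le_norm (z + k)

theorem norm_psi1Remainder_le (hz : 0 < z.re) (k : ℕ) :
    ‖psi1Remainder z k‖ ≤ 2 / ‖z‖ ^ 2 * (‖z + k‖ ^ 2)⁻¹ := by
  have h1 := norm_le_norm_add_natCast hz.le (k + 1)
  have h2 := norm_le_norm_add_natCast hz.le (k + 2)
  push_cast [← add_assoc] at h1 h2
  have hz0 : 0 < ‖z‖ := norm_pos_iff.mpr (by simpa using add_natCast_ne_zero hz 0)
  have hk0 : 0 < ‖z + k‖ := norm_pos_iff.mpr (add_natCast_ne_zero hz k)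
  rw [psi1Remainder, norm_div, norm_mul, norm_mul, norm_pow, Complex.norm_two, ← div_eq_mul_inv,
    div_div]
  refine div_le_div_of_nonneg_left zero_le_two (by positivity) ?_
  calc ‖z‖ ^ 2 * ‖z + k‖ ^ 2 = ‖z + k‖ ^ 2 * (‖z‖ * ‖z‖) := by ring
    _ ≤ ‖z + k‖ ^ 2 * (‖z + k + 1‖ * ‖z + k + 2‖) := by gcongr
    _ = _ := by ring

theorem S_two_eq (hz : 0 < z.re) :
    S 2 z = z⁻¹ + (2 * z * (z + 1))⁻¹ + ∑' k, psi1Remainder z k := by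
  set g : ℕ → ℂ := fun k ↦ (z + k)⁻¹
  set p : ℕ → ℂ := fun k ↦ g k * g (k + 1)
  have hg_succ (k : ℕ) : g (k + 1) = (z + k + 1)⁻¹ := by simp [g, add_assoc]
  have hg_sub (k : ℕ) : g k - g (k + 1) = p k := by
    have := add_natCast_ne_zero hz k
    have := add_natCast_ne_zero hz (k + 1)
    push_cast [← add_assoc] at this
    simp only [p, g, hg_succ]
    field_simp
    ring
  have hp_le (k : ℕ) : ‖p k‖ ≤ (‖z + k‖ ^ 2)⁻¹ := by
    have hmono := norm_le_norm_add_natCast (z := z + k) (by simp only [add_re, natCast_re]; positivity) 1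
    have := add_natCast_ne_zero hz k
    simp only [p, g, hg_succ, norm_mul, norm_inv]
    push_cast at hmono
    rw [sq, mul_inv]
    gcongr
  have hp : Summable p := .of_norm_bounded (summable_inv_sq_norm_add_natCast hz) hp_le
  have hg0 : Tendsto g atTop (𝓝 0) := tendsto_inv_add_natCast
  have h₁ : HasSum (fun k ↦ g k - g (k + 1)) (g 0) :=
    hasSum_sub_succ_of_tendsto_zero (by simpa only [hg_sub] using hp) hg0
  have h₂ : HasSum (fun k ↦ p k - p (k + 1)) (p 0) :=
    hasSum_sub_succ_of_tendsto_zero (hp.sub ((summable_nat_add_iff 1).mpr hp))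
      (by simpa using hg0.mul (hg0.comp (tendsto_add_atTop_nat 1)))
  have h₃ : Summable (psi1Remainder z) :=
    .of_norm_bounded ((summable_inv_sq_norm_add_natCast hz).mul_left _) (norm_psi1Remainder_le hz)
  rw [S]
  convert ((h₁.add (h₂.div_const 2)).add h₃.hasSum).tsum_eq using 1
  · congr 1
    funext k
    have h := add_natCast_ne_zero hz
    have h1 := h (k + 1)
    have h2 := h (k + 2)
    push_cast [← add_assoc] at h1 h2
    rw [one_div_sq_eq_telescoping_add _ (h k) h1 h2]
    simp only [p, g, hg_succ, psi1Remainder]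
    push_cast
    ring
  · simp only [g, p]
    push_cast
    rw [mul_inv, mul_inv]
    ring

theorem tsum_inv_sq_norm_add_natCast_le (hc : 1 < z.re + |z.im|) :
    ∑' k : ℕ, (‖z + k‖ ^ 2)⁻¹ ≤ 2 / (z.re + |z.im| - 1) := by
  set c := z.re + |z.im| - 1 with hc_def
  have hc0 : 0 < c := by linarith
  have hterm (k : ℕ) : (‖z + k‖ ^ 2)⁻¹ ≤ 2 * ((c + k)⁻¹ - (c + (k + 1 : ℕ))⁻¹) := by
    have hk : 0 < c + k := by positivity
    have hnorm : ‖z + k‖ ^ 2 = (z.re + k) ^ 2 + |z.im| ^ 2 := by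
      rw [Complex.sq_norm, normSq_apply, sq_abs]
      simp only [add_re, natCast_re, add_im, natCast_im, add_zero]
      ring
    have htelescope : 2 * ((c + k)⁻¹ - (c + (k + 1 : ℕ))⁻¹) = 2 / ((c + k) * (c + k + 1)) := by
      push_cast
      field_simp
      ring
    -- `c + k + 1 = (z.re + k) + |z.im|` and `(x + w)² ≤ 2 (x² + w²)`
    have hineq : (c + k) * (c + k + 1) ≤ 2 * ‖z + k‖ ^ 2 := by
      rw [hnorm, hc_def]
      nlinarith [k.cast_nonneg (α := ℝ), abs_nonneg z.im, sq_nonneg (z.re + k - |z.im|)]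
    have hprod : 0 < (c + k) * (c + k + 1) := by positivity
    rw [htelescope, ← one_div, div_le_div_iff₀ (by linarith) hprod]
    linarith
  refine Real.tsum_le_of_sum_range_le (fun k ↦ by positivity) fun n ↦ ?_
  calc ∑ k ∈ Finset.range n, (‖z + k‖ ^ 2)⁻¹
      ≤ ∑ k ∈ Finset.range n, 2 * ((c + k)⁻¹ - (c + (k + 1 : ℕ))⁻¹) :=
        Finset.sum_le_sum fun k _ ↦ hterm k
    _ = 2 * (c⁻¹ - (c + n)⁻¹) := by
        rw [← Finset.mul_sum, Finset.sum_range_sub' (fun k : ℕ ↦ (c + k)⁻¹), Nat.cast_zero, add_zero]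
    _ ≤ 2 / c := by
        have : 0 ≤ (c + n)⁻¹ := by positivity
        rw [div_eq_mul_inv]
        linarith

theorem re_S_two_ge (hz : 0 < z.re) (hc : 1 < z.re + |z.im|) :
    (z.re - 1 / 2 - 4 / (z.re + |z.im| - 1)) / ‖z‖ ^ 2 ≤ (S 2 z).re := by
  have hz0 : 0 < ‖z‖ := norm_pos_iff.mpr (by simpa using add_natCast_ne_zero hz 0)
  have hmain : z⁻¹.re = z.re / ‖z‖ ^ 2 := by rw [inv_re, normSq_eq_norm_sq]
  have hsecond : -(1 / 2) / ‖z‖ ^ 2 ≤ (2 * z * (z + 1))⁻¹.re := by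
    have h1 : ‖z‖ ≤ ‖z + 1‖ := by simpa using norm_le_norm_add_natCast hz.le 1
    refine le_trans ?_ (abs_le.mp (abs_re_le_norm _)).1
    rw [neg_div, neg_le_neg_iff, norm_inv, norm_mul, norm_mul, Complex.norm_two, div_div, one_div]
    exact inv_anti₀ (by positivity) (by nlinarith [mul_le_mul_of_nonneg_left h1 hz0.le])
  have hthird : -(4 / (z.re + |z.im| - 1)) / ‖z‖ ^ 2 ≤ (∑' k, psi1Remainder z k).re := by
    refine le_trans ?_ (abs_le.mp (abs_re_le_norm _)).1
    rw [neg_div, neg_le_neg_iff]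
    calc ‖∑' k, psi1Remainder z k‖ ≤ 2 / ‖z‖ ^ 2 * ∑' k : ℕ, (‖z + k‖ ^ 2)⁻¹ :=
          tsum_of_norm_bounded ((summable_inv_sq_norm_add_natCast hz).hasSum.mul_left _)
            (norm_psi1Remainder_le hz)
      _ ≤ 2 / ‖z‖ ^ 2 * (2 / (z.re + |z.im| - 1)) := by
          gcongr
          exact tsum_inv_sq_norm_add_natCast_le hc
      _ = 4 / (z.re + |z.im| - 1) / ‖z‖ ^ 2 := by ring
  rw [S_two_eq hz, add_re, add_re, hmain]
  calc (z.re - 1 / 2 - 4 / (z.re + |z.im| - 1)) / ‖z‖ ^ 2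
      = z.re / ‖z‖ ^ 2 + -(1 / 2) / ‖z‖ ^ 2 + -(4 / (z.re + |z.im| - 1)) / ‖z‖ ^ 2 := by ring
    _ ≤ _ := by gcongr

end

/-- For every `ε > 0` there exists `M > 0` such that for all real `t ≥ 1/2 + ε` and
all real `y` with `|y| > M`, `Re[S₂(t+iy)] > 0`, i.e. `Re[ψ₁(t+iy)] > 0`. -/
theorem re_psi1_pos (ε : ℝ) (hε : 0 < ε) :
    ∃ M : ℝ, 0 < M ∧ ∀ t y : ℝ, 1 / 2 + ε ≤ t → M < |y| →
      0 < (S 2 ((t : ℂ) + y * I)).re := by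
  refine ⟨4 / ε + 1, by positivity, fun t y ht hy ↦ ?_⟩
  set z : ℂ := t + y * I
  have hre : z.re = t := by simp [z]
  have him : z.im = y := by simp [z]
  have hz : 0 < z.re := by rw [hre]; linarith
  have hc : 4 / ε < z.re + |z.im| - 1 := by rw [hre, him]; linarith
  have hc0 : 0 < z.re + |z.im| - 1 := lt_trans (by positivity) hc
  have hsmall : 4 / (z.re + |z.im| - 1) < ε := by rwa [div_lt_comm₀ hc0 hε]
  refine lt_of_lt_of_le (div_pos ?_ ?_) (re_S_two_ge hz (by linarith))
  · linarith
  · exact pow_pos (norm_pos_iff.mpr fun h ↦ by simp [h] at hz) 2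
end
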